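/- Let 1 ≤ p ≤ ∞, m ∈ ℕ_0 and k ∈ ℕ with k > m + 1. Let φ ∈ C_0^k(ℝ) satisfy supp(φ) ⊆ [0,1], φ(t) > 0 on (0,1), and suppose φ^{(k)} has only finitely many zeros in [0,1]. Then for all r, α ∈ ℕ_0 with r ≤ m, α ≤ m and r + α ≤ m there exists a constant C > 0 such that |φ^{(r)}(t) φ^{(α)}(t)| ≤ C |φ(t)|^{1/p} for all t ∈ [0,1] (with |φ(t)|^{1/p} interpreted as 1 when p = ∞). -/

import Mathlib

/-!
Near `0` all derivatives of `φ` up to order `k` vanish and `φ⁽ᵏ⁾` has no zeros, so it has a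
constant sign there, which must be positive because `φ > 0`; integrating down, every `φ⁽ʲ⁾`,
`j ≤ k`, is then positive and increasing near `0`. For such a function the Glaeser-type inequality
`(φ⁽ˡ⁺¹⁾)² ≤ 2 φ⁽ˡ⁾ φ⁽ˡ⁺²⁾` holds, and chaining these log-concavity inequalities gives
`φ⁽ʳ⁾ φ⁽ᵅ⁾ ≤ 2 ^ (r α) φ φ⁽ʳ⁺ᵅ⁾ ≤ C φ`. The same applies near `1` to `t ↦ φ (1 - t)`, and on the
compact middle part `φ` is bounded below. Finally `φ ≤ M φ ^ (1 / p)` because `φ` is bounded.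
-/

open Set Topology Real
open scoped ENNReal

section Discrete

variable {a : ℕ → ℝ} {c : ℝ} {N : ℕ}

theorem mul_succ_le_pow_mul_mul_succ (hc : 0 ≤ c) (hpos : ∀ l ≤ N, 0 < a l)
    (hsq : ∀ l, l + 2 ≤ N → a (l + 1) ^ 2 ≤ c * a l * a (l + 2)) (d : ℕ) :
    ∀ i, i + d + 1 ≤ N → a (i + 1) * a (i + d) ≤ c ^ d * a i * a (i + d + 1) := by
  induction d with
  | zero => intro i _; simp [mul_comm]
  | succ d ih =>
    intro i hi
    have h₁ := hpos (i + 1) (by omega)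
    have h₂ := hpos (i + 2) (by omega)
    have hstep := mul_le_mul (hsq i (by omega)) (ih (i + 1) (by omega))
      (mul_nonneg h₂.le (hpos _ (by omega)).le) (by have := hpos i (by omega); positivity)
    refine le_of_mul_le_mul_left ?_ (mul_pos h₁ h₂)
    calc a (i + 1) * a (i + 2) * (a (i + 1) * a (i + (d + 1)))
        = a (i + 1) ^ 2 * (a (i + 2) * a (i + 1 + d)) := by ring_nf
      _ ≤ c * a i * a (i + 2) * (c ^ d * a (i + 1) * a (i + 1 + d + 1)) := hstep
      _ = a (i + 1) * a (i + 2) * (c ^ (d + 1) * a i * a (i + (d + 1) + 1)) := by ring_nf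

theorem mul_le_pow_mul_zero_mul_add (hc : 0 ≤ c) (hpos : ∀ l ≤ N, 0 < a l)
    (hsq : ∀ l, l + 2 ≤ N → a (l + 1) ^ 2 ≤ c * a l * a (l + 2)) {i j : ℕ} (hij : i + j ≤ N) :
    a i * a j ≤ c ^ (i * j) * a 0 * a (i + j) := by
  wlog hle : i ≤ j generalizing i j
  · simpa only [mul_comm, add_comm] using this (i := j) (j := i) (by omega) (by omega)
  induction i generalizing j with
  | zero => simp
  | succ i ih =>
    obtain ⟨d, rfl⟩ := Nat.exists_eq_add_of_le (Nat.le_of_succ_le hle)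
    calc a (i + 1) * a (i + d) ≤ c ^ d * (a i * a (i + d + 1)) := by
          rw [← mul_assoc]; exact mul_succ_le_pow_mul_mul_succ hc hpos hsq d i (by omega)
      _ ≤ c ^ d * (c ^ (i * (i + d + 1)) * a 0 * a (i + (i + d + 1))) :=
          mul_le_mul_of_nonneg_left (ih (by omega) (by omega)) (pow_nonneg hc _)
      _ = c ^ ((i + 1) * (i + d)) * a 0 * a (i + 1 + (i + d)) := by ring_nf

end Discrete

theorem sq_le_two_mul_mul_of_monotoneOn {f f' f'' : ℝ → ℝ} {a b : ℝ} (hab : a ≤ b)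
    (hf : ∀ x ∈ Icc a b, HasDerivAt f (f' x) x) (hf' : ∀ x ∈ Icc a b, HasDerivAt f' (f'' x) x)
    (hfa : f a = 0) (hf'a : f' a = 0) (hf'_nonneg : ∀ x ∈ Ioo a b, 0 ≤ f' x)
    (hf''_mono : MonotoneOn f'' (Icc a b)) :
    f' b ^ 2 ≤ 2 * f b * f'' b := by
  -- `2 f f''(b) - f'^2` vanishes at `a` and has derivative `2 f' (f''(b) - f'') ≥ 0`.
  let h x := 2 * f x * f'' b - f' x ^ 2
  have hderiv : ∀ x ∈ Icc a b, HasDerivAt h (2 * f' x * (f'' b - f'' x)) x := fun x hx => by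
    refine ((((hf x hx).const_mul 2).mul_const (f'' b)).fun_sub
      ((hf' x hx).fun_pow 2)).congr_deriv ?_
    push_cast; ring
  have hmono : MonotoneOn h (Icc a b) := by
    refine monotoneOn_of_hasDerivWithinAt_nonneg (f' := fun x => 2 * f' x * (f'' b - f'' x))
      (convex_Icc a b) (fun x hx => (hderiv x hx).continuousAt.continuousWithinAt)
      (fun x hx => ?_) (fun x hx => ?_) <;> rw [interior_Icc] at hx
    · exact (hderiv x (Ioo_subset_Icc_self hx)).hasDerivWithinAt
    · exact mul_nonneg (mul_nonneg zero_le_two (hf'_nonneg x hx))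
        (sub_nonneg.2 (hf''_mono (Ioo_subset_Icc_self hx) (right_mem_Icc.2 hab) hx.2.le))
  have := hmono (left_mem_Icc.2 hab) (right_mem_Icc.2 hab) hab
  simp only [h, hfa, hf'a] at this
  linarith

theorem IsPreconnected.forall_pos_or_forall_neg {X : Type*} [TopologicalSpace X] {f : X → ℝ}
    {s : Set X} (hs : IsPreconnected s) (hf : ContinuousOn f s) (hne : ∀ x ∈ s, f x ≠ 0) :
    (∀ x ∈ s, 0 < f x) ∨ (∀ x ∈ s, f x < 0) := by
  by_contra! ⟨⟨a, ha, hfa⟩, ⟨b, hb, hfb⟩⟩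
  obtain ⟨x, hx, hfx⟩ := hs.intermediate_value ha hb hf ⟨hfa, hfb⟩
  exact hne x hx hfx

theorem Set.Finite.eventually_notMem_nhdsNE {X : Type*} [TopologicalSpace X] [T1Space X]
    {S : Set X} (hS : S.Finite) (a : X) : ∀ᶠ x in 𝓝[≠] a, x ∉ S := by
  have : (S \ {a})ᶜ ∈ 𝓝 a := hS.sdiff.isClosed.isOpen_compl.mem_nhds (by simp)
  filter_upwards [nhdsWithin_le_nhds this, self_mem_nhdsWithin] with x hx hxa
  exact fun hxS => hx ⟨hxS, hxa⟩

theorem apply_eq_zero_of_tsupport_subset_Icc {E : Type*} [TopologicalSpace E] [T1Space E] [Zero E]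
    {g : ℝ → E} (hg : Continuous g) {a b : ℝ} (h : tsupport g ⊆ Icc a b) : g a = 0 ∧ g b = 0 := by
  have hzero : (Icc a b)ᶜ ⊆ {x | g x = 0} :=
    fun x hx => image_eq_zero_of_notMem_tsupport (mt (@h x) hx)
  have hclosed : IsClosed {x | g x = 0} := isClosed_singleton.preimage hg
  have hleft : Iio a ⊆ (Icc a b)ᶜ := fun x hx h' => not_le.2 hx h'.1
  have hright : Ioi b ⊆ (Icc a b)ᶜ := fun x hx h' => not_le.2 hx h'.2
  exact ⟨hclosed.closure_subset_iff.2 (hleft.trans hzero) (by simp),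
    hclosed.closure_subset_iff.2 (hright.trans hzero) (by simp)⟩

theorem exists_le_mul_of_isCompact {X : Type*} [TopologicalSpace X] {s : Set X} (hs : IsCompact s)
    {f g : X → ℝ} (hf : ContinuousOn f s) (hg : ContinuousOn g s) (hpos : ∀ x ∈ s, 0 < g x) :
    ∃ C, ∀ x ∈ s, f x ≤ C * g x := by
  obtain ⟨C, hC⟩ := hs.bddAbove_image (hf.div hg fun x hx => (hpos x hx).ne')
  exact ⟨C, fun x hx => (div_le_iff₀ (hpos x hx)).1 (hC ⟨x, hx, rfl⟩)⟩

theorem le_mul_rpow_of_le {x M θ : ℝ} (hx : 0 ≤ x) (hxM : x ≤ M) (hM : 1 ≤ M) (hθ₀ : 0 ≤ θ)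
    (hθ₁ : θ ≤ 1) : x ≤ M * x ^ θ := by
  rcases le_total x 1 with hx1 | hx1
  · calc x = x ^ (1 : ℝ) := (rpow_one x).symm
      _ ≤ x ^ θ := rpow_le_rpow_of_exponent_ge' hx hx1 hθ₀ hθ₁
      _ ≤ M * x ^ θ := le_mul_of_one_le_left (by positivity) hM
  · calc x ≤ M := hxM
      _ ≤ M * x ^ θ := le_mul_of_one_le_right (by linarith) (one_le_rpow hx1 hθ₀)

theorem exists_pos_le_mul_on_Icc {f g : ℝ → ℝ} {a b δ l C₀ C₁ C₂ : ℝ}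
    (hg : ∀ t ∈ Icc a b, 0 ≤ g t) (h₀ : ∀ t ∈ Ico a δ, f t ≤ C₀ * g t)
    (h₁ : ∀ t ∈ Ioc l b, f t ≤ C₁ * g t) (h₂ : ∀ t ∈ Icc δ l, f t ≤ C₂ * g t) :
    ∃ C, 0 < C ∧ ∀ t ∈ Icc a b, f t ≤ C * g t := by
  refine ⟨max (max C₀ (max C₁ C₂)) 1, lt_max_of_lt_right one_pos, fun t ht => ?_⟩
  have hweaken {c : ℝ} (hc : c ≤ max C₀ (max C₁ C₂)) (h : f t ≤ c * g t) :
      f t ≤ max (max C₀ (max C₁ C₂)) 1 * g t :=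
    h.trans (mul_le_mul_of_nonneg_right (hc.trans (le_max_left _ _)) (hg t ht))
  rcases lt_or_ge t δ with htδ | hδt
  · exact hweaken (le_max_left _ _) (h₀ t ⟨ht.1, htδ⟩)
  rcases lt_or_ge l t with hlt | htl
  · exact hweaken (le_max_of_le_right (le_max_left _ _)) (h₁ t ⟨hlt, ht.2⟩)
  · exact hweaken (le_max_of_le_right (le_max_right _ _)) (h₂ t ⟨hδt, htl⟩)

theorem tsupport_iteratedDeriv_subset {𝕜 F : Type*} [NontriviallyNormedField 𝕜]
    [NormedAddCommGroup F] [NormedSpace 𝕜 F] (n : ℕ) (f : 𝕜 → F) :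
    tsupport (iteratedDeriv n f) ⊆ tsupport f := by
  have : iteratedDeriv n f = (fun L => L fun _ => 1) ∘ iteratedFDeriv 𝕜 n f :=
    funext fun x => iteratedDeriv_eq_iteratedFDeriv
  rw [this]
  exact (tsupport_comp_subset rfl _).trans (tsupport_iteratedFDeriv_subset n)

section IteratedDeriv

variable {k : ℕ} {φ : ℝ → ℝ}

theorem ContDiff.hasDerivAt_iteratedDeriv (hφ : ContDiff ℝ k φ) {j : ℕ} (hj : j < k) (x : ℝ) :
    HasDerivAt (iteratedDeriv j φ) (iteratedDeriv (j + 1) φ x) x := by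
  rw [iteratedDeriv_succ]
  exact ((hφ.differentiable_iteratedDeriv j (mod_cast hj)) x).hasDerivAt

theorem ContDiff.strictMonoOn_iteratedDeriv (hφ : ContDiff ℝ k φ) {j : ℕ} (hj : j < k) {a b : ℝ}
    (hpos : ∀ x ∈ Ioo a b, 0 < iteratedDeriv (j + 1) φ x) :
    StrictMonoOn (iteratedDeriv j φ) (Icc a b) :=
  strictMonoOn_of_hasDerivWithinAt_pos (convex_Icc a b)
    (hφ.continuous_iteratedDeriv j (mod_cast hj.le)).continuousOn
    (fun x _ => (hφ.hasDerivAt_iteratedDeriv hj x).hasDerivWithinAt) (by rwa [interior_Icc])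

variable {δ : ℝ}

theorem iteratedDeriv_pos_of_iteratedDeriv_top_pos (hφ : ContDiff ℝ k φ)
    (h0 : ∀ j ≤ k, iteratedDeriv j φ 0 = 0) (hk : ∀ t ∈ Ioo 0 δ, 0 < iteratedDeriv k φ t) :
    ∀ j ≤ k, ∀ t ∈ Ioo 0 δ, 0 < iteratedDeriv j φ t := by
  intro j hj
  refine Nat.decreasingInduction (motive := fun j _ => ∀ t ∈ Ioo 0 δ, 0 < iteratedDeriv j φ t)
    (fun j hj ih t ht => ?_) hk hj
  have hmono := hφ.strictMonoOn_iteratedDeriv hj fun x hx => ih x ⟨hx.1, hx.2.trans ht.2⟩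
  simpa [h0 j hj.le] using hmono (left_mem_Icc.2 ht.1.le) (right_mem_Icc.2 ht.1.le) ht.1

theorem iteratedDeriv_pos_of_iteratedDeriv_top_ne_zero (hφ : ContDiff ℝ k φ)
    (h0 : ∀ j ≤ k, iteratedDeriv j φ 0 = 0) (hφpos : ∀ t ∈ Ioo 0 δ, 0 < φ t)
    (hne : ∀ t ∈ Ioo 0 δ, iteratedDeriv k φ t ≠ 0) :
    ∀ j ≤ k, ∀ t ∈ Ioo 0 δ, 0 < iteratedDeriv j φ t := by
  refine iteratedDeriv_pos_of_iteratedDeriv_top_pos hφ h0 ?_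
  rcases isPreconnected_Ioo.forall_pos_or_forall_neg
    (hφ.continuous_iteratedDeriv k le_rfl).continuousOn hne with hk | hneg
  · exact hk
  intro t ht
  have := iteratedDeriv_pos_of_iteratedDeriv_top_pos hφ.neg (fun j hj => by simp [h0 j hj])
    (fun t ht => by simpa [iteratedDeriv_neg] using hneg t ht) 0 (Nat.zero_le k) t ht
  simp only [iteratedDeriv_zero, neg_pos] at this
  exact absurd (hφpos t ht) this.not_gt

theorem sq_iteratedDeriv_le (hφ : ContDiff ℝ k φ) (h0 : ∀ j ≤ k, iteratedDeriv j φ 0 = 0)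
    (hpos : ∀ j ≤ k, ∀ t ∈ Ioo 0 δ, 0 < iteratedDeriv j φ t) {l : ℕ} (hl : l + 3 ≤ k) {t : ℝ}
    (ht : t ∈ Ioo 0 δ) :
    iteratedDeriv (l + 1) φ t ^ 2 ≤ 2 * iteratedDeriv l φ t * iteratedDeriv (l + 2) φ t :=
  sq_le_two_mul_mul_of_monotoneOn ht.1.le
    (fun x _ => hφ.hasDerivAt_iteratedDeriv (by omega) x)
    (fun x _ => hφ.hasDerivAt_iteratedDeriv (by omega) x) (h0 l (by omega)) (h0 (l + 1) (by omega))
    (fun x hx => (hpos (l + 1) (by omega) x ⟨hx.1, hx.2.trans ht.2⟩).le)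
    (hφ.strictMonoOn_iteratedDeriv (by omega)
      fun x hx => hpos (l + 3) hl x ⟨hx.1, hx.2.trans ht.2⟩).monotoneOn

theorem iteratedDeriv_mul_iteratedDeriv_le (hφ : ContDiff ℝ k φ)
    (h0 : ∀ j ≤ k, iteratedDeriv j φ 0 = 0)
    (hpos : ∀ j ≤ k, ∀ t ∈ Ioo 0 δ, 0 < iteratedDeriv j φ t) {r α : ℕ} (hrα : r + α < k)
    {t : ℝ} (ht : t ∈ Ioo 0 δ) :
    iteratedDeriv r φ t * iteratedDeriv α φ t ≤
      2 ^ (r * α) * φ t * iteratedDeriv (r + α) φ t := by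
  simpa using mul_le_pow_mul_zero_mul_add (a := fun j => iteratedDeriv j φ t) zero_le_two
    (fun l hl => hpos l (by omega) t ht) (fun l hl => sq_iteratedDeriv_le hφ h0 hpos (by omega) ht)
    le_rfl

theorem exists_abs_iteratedDeriv_mul_le_on_Ico (hφ : ContDiff ℝ k φ)
    (h0 : ∀ j ≤ k, iteratedDeriv j φ 0 = 0) (hφpos : ∀ t ∈ Ioo 0 δ, 0 < φ t)
    (hne : ∀ t ∈ Ioo 0 δ, iteratedDeriv k φ t ≠ 0) {r α : ℕ} (hrα : r + α < k) :
    ∃ C, ∀ t ∈ Ico 0 δ, |iteratedDeriv r φ t * iteratedDeriv α φ t| ≤ C * φ t := by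
  have hpos := iteratedDeriv_pos_of_iteratedDeriv_top_ne_zero hφ h0 hφpos hne
  obtain ⟨M, hM⟩ := (isCompact_Icc (a := 0) (b := δ)).exists_bound_of_continuousOn
    (hφ.continuous_iteratedDeriv (r + α) (mod_cast hrα.le)).continuousOn
  refine ⟨2 ^ (r * α) * M, fun t ht => ?_⟩
  rcases ht.1.eq_or_lt with rfl | ht₀
  · have hφ0 : φ 0 = 0 := h0 0 (Nat.zero_le k)
    simp [h0 r (by omega), hφ0]
  have ht' : t ∈ Ioo 0 δ := ⟨ht₀, ht.2⟩
  rw [abs_of_pos (mul_pos (hpos r (by omega) t ht') (hpos α (by omega) t ht'))]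
  calc iteratedDeriv r φ t * iteratedDeriv α φ t
      ≤ 2 ^ (r * α) * φ t * iteratedDeriv (r + α) φ t :=
        iteratedDeriv_mul_iteratedDeriv_le hφ h0 hpos hrα ht'
    _ ≤ 2 ^ (r * α) * φ t * M := by
        gcongr
        · have := hφpos t ht'; positivity
        · exact (le_abs_self _).trans (hM t (Ico_subset_Icc_self ht))
    _ = 2 ^ (r * α) * M * φ t := by ring

theorem exists_abs_iteratedDeriv_mul_le_on_Ioc (hφ : ContDiff ℝ k φ)
    (h1 : ∀ j ≤ k, iteratedDeriv j φ 1 = 0) {l : ℝ} (hφpos : ∀ t ∈ Ioo l 1, 0 < φ t)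
    (hne : ∀ t ∈ Ioo l 1, iteratedDeriv k φ t ≠ 0) {r α : ℕ} (hrα : r + α < k) :
    ∃ C, ∀ t ∈ Ioc l 1, |iteratedDeriv r φ t * iteratedDeriv α φ t| ≤ C * φ t := by
  have hreflect (j : ℕ) (t : ℝ) :
      iteratedDeriv j (fun s => φ (1 - s)) t = (-1) ^ j * iteratedDeriv j φ (1 - t) := by
    simp [iteratedDeriv_comp_const_sub]
  have hmem {t : ℝ} (ht : t ∈ Ioo 0 (1 - l)) : 1 - t ∈ Ioo l 1 :=
    ⟨by linarith [ht.2], by linarith [ht.1]⟩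
  have hψ : ContDiff ℝ k fun s => φ (1 - s) := hφ.comp (contDiff_const.sub contDiff_id)
  obtain ⟨C, hC⟩ := exists_abs_iteratedDeriv_mul_le_on_Ico (δ := 1 - l) hψ
    (fun j hj => by simp [hreflect, h1 j hj]) (fun t ht => hφpos _ (hmem ht))
    (fun t ht => by simpa [hreflect] using hne _ (hmem ht)) hrα
  refine ⟨C, fun t ht => ?_⟩
  simpa [hreflect, abs_mul] using hC (1 - t) ⟨by linarith [ht.2], by linarith [ht.1]⟩

theorem exists_abs_iteratedDeriv_mul_le_on_Icc (hφ : ContDiff ℝ k φ)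
    (hsupp : tsupport φ ⊆ Icc 0 1) (hpos : ∀ t ∈ Ioo (0 : ℝ) 1, 0 < φ t)
    (hzeros : {t ∈ Icc (0 : ℝ) 1 | iteratedDeriv k φ t = 0}.Finite) {r α : ℕ} (hrα : r + α < k) :
    ∃ C, 0 < C ∧ ∀ t ∈ Icc 0 1, |iteratedDeriv r φ t * iteratedDeriv α φ t| ≤ C * φ t := by
  have hvanish (j : ℕ) (hj : j ≤ k) : iteratedDeriv j φ 0 = 0 ∧ iteratedDeriv j φ 1 = 0 :=
    apply_eq_zero_of_tsupport_subset_Icc (hφ.continuous_iteratedDeriv j (mod_cast hj))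
      ((tsupport_iteratedDeriv_subset j φ).trans hsupp)
  have hgood : ∀ t ∈ Ioo (0 : ℝ) 1, t ∉ {t ∈ Icc (0 : ℝ) 1 | iteratedDeriv k φ t = 0} →
      0 < φ t ∧ iteratedDeriv k φ t ≠ 0 :=
    fun t ht hS => ⟨hpos t ht, fun h => hS ⟨Ioo_subset_Icc_self ht, h⟩⟩
  obtain ⟨δ, hδ, hleft⟩ := mem_nhdsGT_iff_exists_Ioo_subset.1 <| show
      ∀ᶠ t in 𝓝[>] 0, 0 < φ t ∧ iteratedDeriv k φ t ≠ 0 by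
    filter_upwards [Ioo_mem_nhdsGT one_pos, nhdsGT_le_nhdsNE 0 (hzeros.eventually_notMem_nhdsNE 0)]
      using hgood
  obtain ⟨l, hl, hright⟩ := mem_nhdsLT_iff_exists_Ioo_subset.1 <| show
      ∀ᶠ t in 𝓝[<] 1, 0 < φ t ∧ iteratedDeriv k φ t ≠ 0 by
    filter_upwards [Ioo_mem_nhdsLT one_pos, nhdsLT_le_nhdsNE 1 (hzeros.eventually_notMem_nhdsNE 1)]
      using hgood
  obtain ⟨C₀, hC₀⟩ := exists_abs_iteratedDeriv_mul_le_on_Ico hφ (fun j hj => (hvanish j hj).1)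
    (fun t ht => (hleft ht).1) (fun t ht => (hleft ht).2) hrα
  obtain ⟨C₁, hC₁⟩ := exists_abs_iteratedDeriv_mul_le_on_Ioc hφ (fun j hj => (hvanish j hj).2)
    (fun t ht => (hright ht).1) (fun t ht => (hright ht).2) hrα
  have hmiddle : Icc δ l ⊆ Ioo 0 1 := fun t ht => ⟨hδ.trans_le ht.1, ht.2.trans_lt hl⟩
  obtain ⟨C₂, hC₂⟩ := exists_le_mul_of_isCompact isCompact_Icc
    ((hφ.continuous_iteratedDeriv r (mod_cast (by omega : r ≤ k))).mul
      (hφ.continuous_iteratedDeriv α (mod_cast (by omega : α ≤ k)))).abs.continuousOn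
    hφ.continuous.continuousOn fun t ht => hpos t (hmiddle ht)
  have hnonneg (t : ℝ) (ht : t ∈ Icc (0 : ℝ) 1) : 0 ≤ φ t :=
    (isClosed_le continuous_const hφ.continuous).closure_subset_iff.2 (fun t ht => (hpos t ht).le)
      (by rwa [closure_Ioo zero_ne_one])
  exact exists_pos_le_mul_on_Icc hnonneg hC₀ hC₁ hC₂

end IteratedDeriv

/-- Corollary (boundedness of products of derivatives of the kernel `φ`): for
`1 ≤ p ≤ ∞`, `m ∈ ℕ₀` and `k > m + 1`, a kernel `φ ∈ C_0^k(ℝ)` with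
`supp φ ⊆ [0,1]`, `φ > 0` on `(0,1)` and `φ^{(k)}` having only finitely many
zeros in `[0,1]` satisfies `|φ^{(r)}(t) φ^{(α)}(t)| ≤ C |φ(t)|^{1/p}` on
`[0,1]` for all `r, α ≤ m` with `r + α ≤ m`. -/
theorem derivative_product_quotient_bound
    (p : ℝ≥0∞) (hp : 1 ≤ p) (m k : ℕ) (hk : m + 1 < k)
    (φ : ℝ → ℝ) (hφ : ContDiff ℝ k φ) (hsupp : tsupport φ ⊆ Set.Icc 0 1)
    (hpos : ∀ t ∈ Set.Ioo (0:ℝ) 1, 0 < φ t)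
    (hzeros : {t ∈ Set.Icc (0:ℝ) 1 | iteratedDeriv k φ t = 0}.Finite) :
    ∀ r α : ℕ, r ≤ m → α ≤ m → r + α ≤ m →
      ∃ C : ℝ, 0 < C ∧ ∀ t ∈ Set.Icc (0:ℝ) 1,
        |iteratedDeriv r φ t * iteratedDeriv α φ t| ≤ C * |φ t| ^ (1 / p.toReal) := by
  intro r α _ _ hrα
  obtain ⟨C, hC, hbound⟩ :=
    exists_abs_iteratedDeriv_mul_le_on_Icc hφ hsupp hpos hzeros (by omega : r + α < k)
  obtain ⟨M, hM⟩ := (isCompact_Icc (a := (0 : ℝ)) (b := 1)).exists_bound_of_continuousOn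
    hφ.continuous.continuousOn
  have hθ₁ : 1 / p.toReal ≤ 1 := by
    rcases eq_or_ne p ⊤ with rfl | hp_top
    · simp
    · exact div_le_one_of_le₀ (by simpa using ENNReal.toReal_mono hp_top hp) (by positivity)
  refine ⟨C * max M 1, by positivity, fun t ht => ?_⟩
  calc |iteratedDeriv r φ t * iteratedDeriv α φ t| ≤ C * |φ t| :=
        (hbound t ht).trans (mul_le_mul_of_nonneg_left (le_abs_self _) hC.le)
    _ ≤ C * (max M 1 * |φ t| ^ (1 / p.toReal)) := by
        gcongr
        exact le_mul_rpow_of_le (abs_nonneg _) ((hM t ht).trans (le_max_left _ _))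
          (le_max_right _ _) (by positivity) hθ₁
    _ = C * max M 1 * |φ t| ^ (1 / p.toReal) := by ring
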